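/- For all real α, β, ρ, all natural numbers n, k, and every natural number m ≥ 1: S^{1,1,q}_{n+m,k}(α,β,ρ) = Σ_{r=0}^{n} Σ_{j=0}^{m} S^{1,1,q}_{m,j}(α,β,ρ) · q^{r(βj − αm − ρ)} · binom(n,r)_{q^{−α}} · S^{1,1,q}_{r,k−j}(α,β,0) · Π_{i=0}^{n−r−1} [βj − ρ − α(m+i)]_q, where S^{1,1,q}_{r,k−j}(α,β,0) is interpreted as 0 when j > k. (Spivey-type convolution for Type II generalized q-Stirling numbers.) -/

import Mathlib

/-- The `q`-bracket `[t]_q = (q^t - 1)/(q - 1)` (real exponentiation). -/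
noncomputable def qBracket (q t : ℝ) : ℝ := (q ^ t - 1) / (q - 1)

open Classical in
/-- The `Q`-binomial coefficient: the sum of `Q^(t₁+⋯+t_{n-k})` over all weakly
increasing integer tuples `0 ≤ t₁ ≤ ⋯ ≤ t_{n-k} ≤ k` when `k ≤ n`, and `0` when `k > n`. -/
noncomputable def qBinom (Q : ℝ) (n k : ℕ) : ℝ :=
  if k ≤ n then
    ∑ f ∈ Finset.univ.filter (fun f : Fin (n - k) → Fin (k + 1) => Monotone f),
      Q ^ (∑ i, (f i : ℕ))
  else 0

/-- The generalized `q`-Stirling numbers `S^{c,d}_{s,q}[n,k]`. -/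
noncomputable def genStirlingCD (c d s q : ℝ) : ℕ → ℕ → ℝ
  | 0, 0 => 1
  | 0, _ + 1 => 0
  | _ + 1, 0 => 0
  | n + 1, k + 1 =>
    if k + 1 ≤ n + 1 then
      q ^ (c * (n : ℝ) + d + ((n : ℝ) - (k : ℝ)) * (s - 1)) * genStirlingCD c d s q n k
        + qBracket q (c * (n : ℝ) + d + ((n : ℝ) - (k : ℝ) - 1) * (s - 1)) *
            genStirlingCD c d s q n (k + 1)
    else 0

/-- The Type II generalized `q`-Stirling numbers of Remmel and Wachs,
via the identification `S^{1,1,q}_{n,k}(α,β,ρ) = S^{β-α,-ρ}_{1-β,q}[n,k]`. -/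
noncomputable def typeIIStirling (q α β ρ : ℝ) (n k : ℕ) : ℝ :=
  genStirlingCD (β - α) (-ρ) (1 - β) q n k

/-! For fixed `j`, the inner sum over `r` depends only on `x = βj - αm - ρ`, `n` and
`l = k - j`; call it `V(x, n, l)`. By the `q^{-α}`-Pascal rule for `binom(n+1, r)`, the
recursion of `S_{r+1,l+1}(α,β,0)` and `[a]_q + q^a [b]_q = [a+b]_q`, it obeys the Type II
recursion with `ρ = -x`, while its column `V(x, n, 0) = ∏_{i<n} [x - αi]` is exactly what the
term `j = k + 1` needs. Hence the right-hand side satisfies the same recursion in `n` as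
`S_{n+m,k}(α,β,ρ)`; the column `k = 0` vanishes on both sides because `S_{m,0} = 0`
for `m ≥ 1`. -/

open Finset

lemma Fin.monotone_cons {α : Type*} [Preorder α] {n : ℕ} {x : α} {g : Fin n → α}
    (hx : ∀ i, x ≤ g i) (hg : Monotone g) : Monotone (Fin.cons x g : Fin (n + 1) → α) := by
  intro a b hab
  cases a using Fin.cases with
  | zero => cases b using Fin.cases with
    | zero => exact le_rfl
    | succ j => exact hx j
  | succ i => cases b using Fin.cases with
    | zero => exact absurd (Fin.le_zero_iff.mp hab) (Fin.succ_ne_zero i)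
    | succ j => exact hg (Fin.succ_le_succ_iff.mp hab)

lemma qBracket_add {q : ℝ} (hq : 0 < q) (x y : ℝ) :
    qBracket q (x + y) = qBracket q x + q ^ x * qBracket q y := by
  simp only [qBracket, Real.rpow_add hq]
  ring

section QBinom

open Classical

variable (Q : ℝ)

noncomputable def monotoneTupleSum (L k : ℕ) : ℝ :=
  ∑ f ∈ univ.filter (fun f : Fin L → Fin (k + 1) => Monotone f), Q ^ ∑ i, (f i : ℕ)

lemma qBinom_of_le {n k : ℕ} (h : k ≤ n) : qBinom Q n k = monotoneTupleSum Q (n - k) k :=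
  if_pos h

lemma qBinom_of_lt {n k : ℕ} (h : n < k) : qBinom Q n k = 0 :=
  if_neg (by omega)

lemma monotoneTupleSum_zero_left (k : ℕ) : monotoneTupleSum Q 0 k = 1 := by
  rw [monotoneTupleSum, filter_true_of_mem fun f _ a => a.elim0]
  simp

lemma monotoneTupleSum_zero_right (L : ℕ) : monotoneTupleSum Q L 0 = 1 := by
  rw [monotoneTupleSum,
    filter_true_of_mem fun f _ a b _ => (Subsingleton.elim (α := Fin 1) (f a) (f b)).le]
  simp

lemma qBinom_zero_right (n : ℕ) : qBinom Q n 0 = 1 := by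
  rw [qBinom_of_le Q n.zero_le, monotoneTupleSum_zero_right]

lemma qBinom_self (n : ℕ) : qBinom Q n n = 1 := by
  rw [qBinom_of_le Q le_rfl, Nat.sub_self, monotoneTupleSum_zero_left]

lemma sum_monotone_head_eq_zero (L k : ℕ) :
    ∑ f ∈ univ.filter (fun f : Fin (L + 1) → Fin (k + 2) => Monotone f) with f 0 = 0,
      Q ^ ∑ i, (f i : ℕ) = monotoneTupleSum Q L (k + 1) := by
  refine sum_nbij' Fin.tail (fun g => Fin.cons (0 : Fin (k + 2)) g) ?_ ?_ ?_ ?_ ?_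
  · simp only [mem_filter, mem_univ, true_and, and_imp]
    exact fun f hf _ a b hab => hf (Fin.succ_le_succ_iff.mpr hab)
  · simp only [mem_filter, mem_univ, true_and]
    exact fun g hg => ⟨Fin.monotone_cons (fun i => Fin.zero_le _) hg, Fin.cons_zero _ _⟩
  · simp only [mem_filter, mem_univ, true_and, and_imp]
    intro f _ hf0
    rw [← hf0, Fin.cons_self_tail]
  · simp
  · simp only [mem_filter, mem_univ, true_and, and_imp]
    intro f _ hf0
    simp [Fin.sum_univ_succ, hf0, Fin.tail]

lemma sum_monotone_head_ne_zero (L k : ℕ) :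
    ∑ f ∈ univ.filter (fun f : Fin (L + 1) → Fin (k + 2) => Monotone f) with ¬f 0 = 0,
      Q ^ ∑ i, (f i : ℕ) = Q ^ (L + 1) * monotoneTupleSum Q (L + 1) k := by
  rw [monotoneTupleSum, mul_sum]
  symm
  refine sum_nbij' (fun h => Fin.succ ∘ h) (fun f => Fin.predAbove 0 ∘ f) ?_ ?_ ?_ ?_ ?_
  · simp only [mem_filter, mem_univ, true_and]
    exact fun h hh => ⟨Fin.strictMono_succ.monotone.comp hh, Fin.succ_ne_zero _⟩
  · simp only [mem_filter, mem_univ, true_and]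
    exact fun f hf => (Fin.predAbove_right_monotone 0).comp hf.1
  · intro h _
    funext i
    exact Fin.predAbove_zero_succ
  · simp only [mem_filter, mem_univ, true_and, and_imp]
    intro f hf hf0
    funext i
    exact Fin.succ_predAbove_zero fun hi => hf0 (Fin.le_zero_iff.mp (hi ▸ hf (Fin.zero_le i)))
  · intro h _
    simp [sum_add_distrib, pow_add, mul_comm]

lemma monotoneTupleSum_succ_succ (L k : ℕ) :
    monotoneTupleSum Q (L + 1) (k + 1)
      = monotoneTupleSum Q L (k + 1) + Q ^ (L + 1) * monotoneTupleSum Q (L + 1) k := by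
  rw [← sum_monotone_head_eq_zero Q L k, ← sum_monotone_head_ne_zero Q L k,
    sum_filter_add_sum_filter_not]
  rfl

lemma qBinom_succ_succ {n k : ℕ} (h : k ≤ n) :
    qBinom Q (n + 1) (k + 1) = qBinom Q n (k + 1) + Q ^ (n - k) * qBinom Q n k := by
  obtain rfl | hlt := h.eq_or_lt
  · rw [qBinom_self, qBinom_self, qBinom_of_lt Q k.lt_succ_self, Nat.sub_self]
    ring
  · obtain ⟨L, rfl⟩ := Nat.exists_eq_add_of_lt hlt
    rw [qBinom_of_le Q (by omega), qBinom_of_le Q (by omega), qBinom_of_le Q (by omega),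
      show k + L + 1 + 1 - (k + 1) = L + 1 by omega, show k + L + 1 - (k + 1) = L by omega,
      show k + L + 1 - k = L + 1 by omega, monotoneTupleSum_succ_succ]

lemma sum_range_qBinom_succ_mul (n : ℕ) (F : ℕ → ℝ) :
    ∑ r ∈ range (n + 2), qBinom Q (n + 1) r * F r
      = ∑ r ∈ range (n + 1), qBinom Q n r * F r
        + ∑ r ∈ range (n + 1), Q ^ (n - r) * qBinom Q n r * F (r + 1) := by
  have pascal : ∑ r ∈ range (n + 1), qBinom Q (n + 1) (r + 1) * F (r + 1)
      = ∑ r ∈ range (n + 1), qBinom Q n (r + 1) * F (r + 1)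
        + ∑ r ∈ range (n + 1), Q ^ (n - r) * qBinom Q n r * F (r + 1) := by
    rw [← sum_add_distrib]
    refine sum_congr rfl fun r hr => ?_
    rw [qBinom_succ_succ Q (Nat.lt_succ_iff.mp (mem_range.mp hr))]
    ring
  have shift : ∑ r ∈ range (n + 1), qBinom Q n (r + 1) * F (r + 1) + F 0
      = ∑ r ∈ range (n + 1), qBinom Q n r * F r := by
    rw [sum_range_succ, qBinom_of_lt Q n.lt_succ_self, zero_mul, add_zero,
      sum_range_succ' (fun r => qBinom Q n r * F r), qBinom_zero_right, one_mul]
  rw [sum_range_succ', pascal, qBinom_zero_right, one_mul, ← shift]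
  ring

end QBinom

lemma genStirlingCD_of_lt (c d s q : ℝ) {n k : ℕ} (h : n < k) :
    genStirlingCD c d s q n k = 0 := by
  match n, k, h with
  | 0, _ + 1, _ => rfl
  | _ + 1, _ + 1, h => exact if_neg (by omega)

lemma genStirlingCD_succ_succ (c d s q : ℝ) (n k : ℕ) :
    genStirlingCD c d s q (n + 1) (k + 1)
      = q ^ (c * n + d + (n - k) * (s - 1)) * genStirlingCD c d s q n k
        + qBracket q (c * n + d + (n - k - 1) * (s - 1)) * genStirlingCD c d s q n (k + 1) := by
  rcases le_or_gt k n with h | h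
  · exact if_pos (by omega)
  · rw [genStirlingCD_of_lt _ _ _ _ (by omega : n + 1 < k + 1), genStirlingCD_of_lt _ _ _ _ h,
      genStirlingCD_of_lt _ _ _ _ (by omega : n < k + 1)]
    ring

section TypeII

variable (q α β ρ : ℝ)

lemma typeIIStirling_of_lt {n k : ℕ} (h : n < k) : typeIIStirling q α β ρ n k = 0 :=
  genStirlingCD_of_lt _ _ _ _ h

lemma typeIIStirling_succ_zero (n : ℕ) : typeIIStirling q α β ρ (n + 1) 0 = 0 := rfl

lemma typeIIStirling_zero_left (k : ℕ) :
    typeIIStirling q α β ρ 0 k = if k = 0 then 1 else 0 := by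
  cases k <;> rfl

lemma typeIIStirling_succ_succ (n k : ℕ) :
    typeIIStirling q α β ρ (n + 1) (k + 1)
      = q ^ (β * k - α * n - ρ) * typeIIStirling q α β ρ n k
        + qBracket q (β * (k + 1) - α * n - ρ) * typeIIStirling q α β ρ n (k + 1) := by
  simp only [typeIIStirling, genStirlingCD_succ_succ]
  congr 3 <;> ring

end TypeII

lemma rpow_neg_pow_sub_mul_rpow {q : ℝ} (hq : 0 < q) (α x : ℝ) {n r : ℕ} (hr : r ≤ n) :
    (q ^ (-α)) ^ (n - r) * q ^ (((r + 1 : ℕ) : ℝ) * x)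
      = q ^ ((r : ℝ) * x) * q ^ (x - α * (n - r)) := by
  rw [← Real.rpow_natCast, ← Real.rpow_mul hq.le, ← Real.rpow_add hq, ← Real.rpow_add hq,
    Nat.cast_sub hr]
  push_cast
  ring_nf

section Kernel

variable (q α β : ℝ)

noncomputable def spiveyKernel (x : ℝ) (n l : ℕ) : ℝ :=
  ∑ r ∈ range (n + 1), q ^ ((r : ℝ) * x) * qBinom (q ^ (-α)) n r *
    typeIIStirling q α β 0 r l * ∏ i ∈ range (n - r), qBracket q (x - α * i)

lemma spiveyKernel_zero_left (x : ℝ) (l : ℕ) :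
    spiveyKernel q α β x 0 l = if l = 0 then 1 else 0 := by
  simp [spiveyKernel, qBinom_zero_right, typeIIStirling_zero_left]

lemma spiveyKernel_zero_right (x : ℝ) (n : ℕ) :
    spiveyKernel q α β x n 0 = ∏ i ∈ range n, qBracket q (x - α * i) := by
  rw [spiveyKernel, sum_range_succ', sum_eq_zero fun r _ => by
    rw [typeIIStirling_succ_zero, mul_zero, zero_mul]]
  simp [qBinom_zero_right, typeIIStirling_zero_left]

variable {q}

lemma spiveyKernel_succ_succ (hq : 0 < q) (x : ℝ) (n l : ℕ) :
    spiveyKernel q α β x (n + 1) (l + 1)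
      = q ^ (x + β * l - α * n) * spiveyKernel q α β x n l
        + qBracket q (x + β * (l + 1) - α * n) * spiveyKernel q α β x n (l + 1) := by
  set A := typeIIStirling q α β 0
  set P : ℕ → ℝ := fun t => ∏ i ∈ range t, qBracket q (x - α * i)
  set F : ℕ → ℝ := fun r => q ^ ((r : ℝ) * x) * A r (l + 1) * P (n + 1 - r)
  have termwise : ∀ r ≤ n,
      qBinom (q ^ (-α)) n r * F r + (q ^ (-α)) ^ (n - r) * qBinom (q ^ (-α)) n r * F (r + 1)
        = q ^ (x + β * l - α * n) *
            (q ^ ((r : ℝ) * x) * qBinom (q ^ (-α)) n r * A r l * P (n - r))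
          + qBracket q (x + β * (l + 1) - α * n) *
            (q ^ ((r : ℝ) * x) * qBinom (q ^ (-α)) n r * A r (l + 1) * P (n - r)) := by
    intro r hr
    have hP : P (n + 1 - r) = P (n - r) * qBracket q (x - α * (n - r)) := by
      simp only [P, show n + 1 - r = n - r + 1 by omega, prod_range_succ, Nat.cast_sub hr]
    have hA : A (r + 1) (l + 1) = q ^ (β * l - α * r) * A r l
        + qBracket q (β * (l + 1) - α * r) * A r (l + 1) := by
      simpa only [sub_zero] using typeIIStirling_succ_succ q α β 0 r l
    have hE := rpow_neg_pow_sub_mul_rpow hq α x hr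
    have hE' : q ^ (x - α * (n - r)) * q ^ (β * l - α * r) = q ^ (x + β * l - α * n) := by
      rw [← Real.rpow_add hq]
      ring_nf
    have hB : qBracket q (x + β * (l + 1) - α * n)
        = qBracket q (x - α * (n - r))
          + q ^ (x - α * (n - r)) * qBracket q (β * (l + 1) - α * r) := by
      rw [← qBracket_add hq]
      ring_nf
    simp only [F, hP, hA, Nat.add_sub_add_right]
    linear_combination (qBinom (q ^ (-α)) n r * (q ^ (β * l - α * r) * A r l
        + qBracket q (β * (l + 1) - α * r) * A r (l + 1)) * P (n - r)) * hE
      + (qBinom (q ^ (-α)) n r * q ^ ((r : ℝ) * x) * A r l * P (n - r)) * hE'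
      - (q ^ ((r : ℝ) * x) * qBinom (q ^ (-α)) n r * A r (l + 1) * P (n - r)) * hB
  calc spiveyKernel q α β x (n + 1) (l + 1)
      = ∑ r ∈ range (n + 2), qBinom (q ^ (-α)) (n + 1) r * F r :=
        sum_congr rfl fun r _ => by ring
    _ = ∑ r ∈ range (n + 1), (qBinom (q ^ (-α)) n r * F r
          + (q ^ (-α)) ^ (n - r) * qBinom (q ^ (-α)) n r * F (r + 1)) := by
        rw [sum_range_qBinom_succ_mul, sum_add_distrib]
    _ = _ := by
        rw [spiveyKernel, spiveyKernel, mul_sum, mul_sum, ← sum_add_distrib]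
        exact sum_congr rfl fun r hr => termwise r (Nat.lt_succ_iff.mp (mem_range.mp hr))

lemma spiveyKernel_shift_succ_succ (hq : 0 < q) (x : ℝ) (n k j : ℕ) :
    (if j ≤ k + 1 then spiveyKernel q α β x (n + 1) (k + 1 - j) else 0)
      = q ^ (x + β * (k - j) - α * n) * (if j ≤ k then spiveyKernel q α β x n (k - j) else 0)
        + qBracket q (x + β * (k + 1 - j) - α * n) *
            (if j ≤ k + 1 then spiveyKernel q α β x n (k + 1 - j) else 0) := by
  rcases lt_trichotomy j (k + 1) with hj | rfl | hj
  · rw [if_pos hj.le, if_pos (Nat.lt_succ_iff.mp hj), if_pos hj.le,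
      show k + 1 - j = k - j + 1 by omega, spiveyKernel_succ_succ α β hq]
    push_cast [Nat.cast_sub (Nat.lt_succ_iff.mp hj)]
    ring_nf
  · rw [if_pos le_rfl, if_neg (by omega), if_pos le_rfl, Nat.sub_self,
      spiveyKernel_zero_right, spiveyKernel_zero_right, prod_range_succ]
    push_cast
    ring_nf
  · rw [if_neg (by omega), if_neg (by omega), if_neg (by omega)]
    ring

end Kernel

lemma typeIIStirling_add_eq_sum_spiveyKernel {q : ℝ} (hq : 0 < q) (α β ρ : ℝ) {m : ℕ}
    (hm : 1 ≤ m) (n k : ℕ) :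
    typeIIStirling q α β ρ (n + m) k
      = ∑ j ∈ range (m + 1), typeIIStirling q α β ρ m j *
          if j ≤ k then spiveyKernel q α β (β * j - α * m - ρ) n (k - j) else 0 := by
  induction n generalizing k with
  | zero =>
    have hterm : ∀ j ∈ range (m + 1), typeIIStirling q α β ρ m j *
        (if j ≤ k then spiveyKernel q α β (β * j - α * m - ρ) 0 (k - j) else 0)
          = if k = j then typeIIStirling q α β ρ m j else 0 := fun j _ => by
      rw [spiveyKernel_zero_left]
      split_ifs <;> grind
    rw [zero_add, sum_congr rfl hterm, sum_ite_eq]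
    split_ifs with hk
    · rfl
    · exact typeIIStirling_of_lt q α β ρ (by simpa using hk)
  | succ n ih =>
    cases k with
    | zero =>
      obtain ⟨m, rfl⟩ := Nat.exists_eq_add_of_le' hm
      rw [show n + 1 + (m + 1) = n + (m + 1) + 1 by omega, typeIIStirling_succ_zero]
      refine (sum_eq_zero fun j _ => ?_).symm
      cases j with
      | zero => rw [typeIIStirling_succ_zero, zero_mul]
      | succ j => rw [if_neg (by omega), mul_zero]
    | succ k =>
      rw [show n + 1 + m = n + m + 1 by omega, typeIIStirling_succ_succ, ih, ih, mul_sum,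
        mul_sum, ← sum_add_distrib]
      refine sum_congr rfl fun j _ => ?_
      rw [spiveyKernel_shift_succ_succ α β hq]
      push_cast
      ring_nf

theorem spivey_typeII_general (q : ℝ) (hq : 0 < q) (α β ρ : ℝ) (n k m : ℕ)
    (hm : 1 ≤ m) :
    typeIIStirling q α β ρ (n + m) k
    = ∑ r ∈ Finset.range (n + 1), ∑ j ∈ Finset.range (m + 1),
        typeIIStirling q α β ρ m j *
          q ^ ((r : ℝ) * (β * (j : ℝ) - α * (m : ℝ) - ρ)) *
          qBinom (q ^ (-α)) n r *
          (if j ≤ k then typeIIStirling q α β 0 r (k - j) else 0) *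
          ∏ i ∈ Finset.range (n - r),
            qBracket q (β * (j : ℝ) - ρ - α * ((m : ℝ) + (i : ℝ))) := by
  rw [typeIIStirling_add_eq_sum_spiveyKernel hq α β ρ hm, sum_comm]
  refine sum_congr rfl fun j _ => ?_
  split_ifs
  · rw [spiveyKernel, mul_sum]
    refine sum_congr rfl fun r _ => ?_
    ring_nf
  · simp

/-- Spivey-type convolution for Type II generalized `q`-Stirling numbers. -/
theorem spivey_typeII (q : ℝ) (hq : 0 < q) (hq1 : q ≠ 1) (α β ρ : ℝ) (n k m : ℕ)
    (hm : 1 ≤ m) :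
    typeIIStirling q α β ρ (n + m) k
    = ∑ r ∈ Finset.range (n + 1), ∑ j ∈ Finset.range (m + 1),
        typeIIStirling q α β ρ m j *
          q ^ ((r : ℝ) * (β * (j : ℝ) - α * (m : ℝ) - ρ)) *
          qBinom (q ^ (-α)) n r *
          (if j ≤ k then typeIIStirling q α β 0 r (k - j) else 0) *
          ∏ i ∈ Finset.range (n - r),
            qBracket q (β * (j : ℝ) - ρ - α * ((m : ℝ) + (i : ℝ))) :=
  spivey_typeII_general q hq α β ρ n k m hm
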